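/- arXiv:1810.04579 — 3 statements merged into one kernel-verified Lean document; each statement's English description precedes it below -/
import Mathlib

section
/- More generally, for any Δ > 1: any (λ,C)-quasi-isometric map c : [a,b] → X with d(c(a), c(b)) ≥ Δ·C can be approximated up to 4ΔC by a continuous map d : [a,b] → X with d(a) = c(a), d(b) = c(b), which is a (λ, (8Δ+1)C)-quasi-isometric map and is (Δ/(Δ−1))·λ-Lipschitz. -/
open Metric Set Real

noncomputable section

variable {X : Type*} [MetricSpace X]

/-- Gromov product (x,y)_w. -/
def gromovProd (x y w : X) : ℝ := (dist x w + dist y w - dist x y) / 2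

/-- δ-hyperbolicity: four-point inequality for the Gromov product. -/
def IsHyperbolic (X : Type*) [MetricSpace X] (δ : ℝ) : Prop :=
  ∀ x y z w : X, min (gromovProd x y w) (gromovProd y z w) - δ ≤ gromovProd x z w

/-- `G` is a geodesic segment between `x` and `y`. -/
def GeodesicSegmentBetween (G : Set X) (x y : X) : Prop :=
  ∃ f : ℝ → X, f 0 = x ∧ f (dist x y) = y ∧
    (∀ s ∈ Icc (0:ℝ) (dist x y), ∀ t ∈ Icc (0:ℝ) (dist x y), dist (f s) (f t) = |s - t|) ∧
    G = f '' Icc (0:ℝ) (dist x y)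

/-- A geodesic metric space: any two points are joined by a geodesic segment. -/
def GeodesicSpace (X : Type*) [MetricSpace X] : Prop :=
  ∀ x y : X, ∃ G : Set X, GeodesicSegmentBetween G x y

/-- `(λ, C)`-quasi-isometric map on a set of reals. -/
def QuasiIsometryOn (lam C : ℝ) (s : Set ℝ) (f : ℝ → X) : Prop :=
  1 ≤ lam ∧ 0 ≤ C ∧ ∀ x ∈ s, ∀ y ∈ s,
    lam⁻¹ * |y - x| - C ≤ dist (f x) (f y) ∧ dist (f x) (f y) ≤ lam * |y - x| + C

/-- `K`-quasiconvexity of a subset. -/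
def Quasiconvex (K : ℝ) (Y : Set X) : Prop :=
  ∀ y₁ ∈ Y, ∀ y₂ ∈ Y, ∃ G : Set X, GeodesicSegmentBetween G y₁ y₂ ∧
    ∀ z ∈ G, infDist z Y ≤ K

/-- `p` is a closest-point projection of `x` on `Y`. -/
def ProjOn (p x : X) (Y : Set X) : Prop := p ∈ Y ∧ dist x p = infDist x Y

/-!
Cut `[a, b]` into `N` steps of equal length `h` with `(Δ - 1) C ≤ λ h ≤ 2 (Δ - 1) C`; this is
possible because `Δ C ≤ d(c a, c b) ≤ λ (b - a) + C`. Joining the consecutive nodes `c (a + i h)`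
by geodesics traversed at constant speed gives a map whose speed on each step is at most
`(λ h + C) / h ≤ Δ λ / (Δ - 1)`. Every point is within `h` of a node where the two maps agree, which
gives the `4 Δ C` approximation, and the quasi-isometry bounds then follow from those of `c`.
When `C = 0` the map `c` is already `λ`-Lipschitz.
-/

open scoped NNReal

theorem LipschitzOnWith.Icc_ite {α : Type*} [PseudoMetricSpace α] {f g : ℝ → α} {K : ℝ≥0}
    {a m b : ℝ} (hf : LipschitzOnWith K f (Icc a m)) (hg : LipschitzOnWith K g (Icc m b))
    (hfg : f m = g m) :
    LipschitzOnWith K (fun u => if u ≤ m then f u else g u) (Icc a b) := by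
  refine LipschitzOnWith.of_dist_le_mul fun x hx y hy => ?_
  wlog hxy : x ≤ y generalizing x y
  · rw [dist_comm, dist_comm x]
    exact this y hy x hx (le_of_not_ge hxy)
  split_ifs with hxm hym hym
  · exact hf.dist_le_mul x ⟨hx.1, hxm⟩ y ⟨hy.1, hym⟩
  · calc dist (f x) (g y) ≤ dist (f x) (f m) + dist (g m) (g y) := hfg ▸ dist_triangle _ _ _
      _ ≤ K * dist x m + K * dist m y :=
          add_le_add (hf.dist_le_mul x ⟨hx.1, hxm⟩ m ⟨hx.1.trans hxm, le_rfl⟩)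
            (hg.dist_le_mul m ⟨le_rfl, (not_le.1 hym).le.trans hy.2⟩ y ⟨(not_le.1 hym).le, hy.2⟩)
      _ = K * dist x y := by
          rw [Real.dist_eq, Real.dist_eq, Real.dist_eq, abs_of_nonpos (by linarith),
            abs_of_nonpos (by linarith [not_le.1 hym]), abs_of_nonpos (by linarith)]
          ring
  · exact absurd (hxy.trans hym) hxm
  · exact hg.dist_le_mul x ⟨(not_le.1 hxm).le, hx.2⟩ y ⟨(not_le.1 hym).le, hy.2⟩

theorem GeodesicSpace.exists_lipschitzOnWith_Icc (hX : GeodesicSpace X) (x y : X) {s u : ℝ}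
    (hsu : s < u) {K : ℝ≥0} (hxy : dist x y ≤ K * (u - s)) :
    ∃ γ : ℝ → X, γ s = x ∧ γ u = y ∧ LipschitzOnWith K γ (Icc s u) := by
  obtain ⟨-, f, hf0, hfD, hf, -⟩ := hX x y
  have hus : 0 < u - s := sub_pos.2 hsu
  set r := dist x y / (u - s)
  have hr : 0 ≤ r := by positivity
  have hrK : r ≤ K := (div_le_iff₀ hus).2 hxy
  have hmem : ∀ v ∈ Icc s u, r * (v - s) ∈ Icc 0 (dist x y) := fun v hv =>
    ⟨mul_nonneg hr (sub_nonneg.2 hv.1),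
      (mul_le_mul_of_nonneg_left (by linarith [hv.2]) hr).trans (div_mul_cancel₀ _ hus.ne').le⟩
  refine ⟨fun v => f (r * (v - s)), by simpa using hf0, ?_, ?_⟩
  · simpa [r, div_mul_cancel₀ _ hus.ne'] using hfD
  refine LipschitzOnWith.of_dist_le_mul fun v hv w hw => ?_
  rw [hf _ (hmem v hv) _ (hmem w hw), ← mul_sub, sub_sub_sub_cancel_right, abs_mul, abs_of_nonneg hr,
    ← Real.dist_eq]
  exact mul_le_mul_of_nonneg_right hrK dist_nonneg

theorem GeodesicSpace.exists_lipschitzOnWith_interpolation (hX : GeodesicSpace X) (c : ℝ → X)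
    {t : ℕ → ℝ} (ht : StrictMono t) {K : ℝ≥0} (N : ℕ)
    (hstep : ∀ i < N, dist (c (t i)) (c (t (i + 1))) ≤ K * (t (i + 1) - t i)) :
    ∃ d : ℝ → X, (∀ i ≤ N, d (t i) = c (t i)) ∧ LipschitzOnWith K d (Icc (t 0) (t N)) := by
  induction N with
  | zero =>
    refine ⟨c, fun i hi => rfl, LipschitzOnWith.of_dist_le_mul fun x hx y hy => ?_⟩
    rw [Icc_self, mem_singleton_iff] at hx hy
    simp [hx, hy]
  | succ N ih =>
    obtain ⟨d, hd, hdK⟩ := ih fun i hi => hstep i (by omega)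
    obtain ⟨γ, hγN, hγN', hγK⟩ :=
      hX.exists_lipschitzOnWith_Icc _ _ (ht N.lt_succ_self) (hstep N N.lt_succ_self)
    refine ⟨fun u => if u ≤ t N then d u else γ u, fun i hi => ?_,
      hdK.Icc_ite hγK ((hd N le_rfl).trans hγN.symm)⟩
    obtain hi | rfl := hi.lt_or_eq
    · have hi := Nat.lt_succ_iff.1 hi
      simp [ht.monotone hi, hd i hi]
    · simp [ht N.lt_succ_self, hγN']

theorem GeodesicSpace.exists_lipschitzOnWith_uniform_interpolation (hX : GeodesicSpace X)
    (c : ℝ → X) {a h : ℝ} (hh : 0 < h) {K : ℝ≥0} (N : ℕ)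
    (hstep : ∀ i < N, dist (c (a + i * h)) (c (a + ↑(i + 1) * h)) ≤ K * h) :
    ∃ d : ℝ → X, LipschitzOnWith K d (Icc a (a + N * h)) ∧
      ∀ i ≤ N, d (a + i * h) = c (a + i * h) := by
  have ht : StrictMono fun i : ℕ => a + i * h := fun i j hij => by
    simp only
    gcongr
  obtain ⟨d, hdc, hd⟩ := hX.exists_lipschitzOnWith_interpolation c ht N fun i hi => by
    simpa [add_mul] using hstep i hi
  exact ⟨d, by simpa using hd, hdc⟩

theorem exists_nat_pos_div_mem_Icc {ℓ m : ℝ} (hm : 0 < m) (hmℓ : m ≤ ℓ) :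
    ∃ N : ℕ, 0 < N ∧ ℓ / N ∈ Icc m (2 * m) := by
  have hℓm : 1 ≤ ℓ / m := (one_le_div hm).2 hmℓ
  have hN : 0 < ⌊ℓ / m⌋₊ := Nat.floor_pos.2 hℓm
  have hN' : (0 : ℝ) < ⌊ℓ / m⌋₊ := Nat.cast_pos.2 hN
  refine ⟨⌊ℓ / m⌋₊, hN, (le_div_iff₀ hN').2 ?_, (div_le_iff₀ hN').2 ?_⟩
  · rw [mul_comm, ← le_div_iff₀ hm]
    exact Nat.floor_le (by linarith)
  · have h1 : ℓ / m < ⌊ℓ / m⌋₊ + 1 := Nat.lt_floor_add_one _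
    have h2 : (1 : ℝ) ≤ ⌊ℓ / m⌋₊ := Nat.one_le_cast.2 hN
    rw [div_lt_iff₀ hm] at h1
    nlinarith

theorem exists_nat_le_abs_sub_add_mul_le {a h u : ℝ} {N : ℕ} (hh : 0 < h)
    (hu : u ∈ Icc a (a + N * h)) : ∃ i ≤ N, |u - (a + i * h)| ≤ h := by
  have hua : 0 ≤ (u - a) / h := div_nonneg (by linarith [hu.1]) hh.le
  refine ⟨⌊(u - a) / h⌋₊, Nat.floor_le_of_le ((div_le_iff₀ hh).2 (by linarith [hu.2])), ?_⟩
  have h1 : ⌊(u - a) / h⌋₊ * h ≤ u - a := (le_div_iff₀ hh).1 (Nat.floor_le hua)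
  have h2 : u - a < (⌊(u - a) / h⌋₊ + 1) * h := (div_lt_iff₀ hh).1 (Nat.lt_floor_add_one _)
  rw [abs_le]
  constructor <;> nlinarith

namespace QuasiIsometryOn

variable {lam C : ℝ} {s : Set ℝ} {f : ℝ → X}

theorem lipschitzOnWith (hf : QuasiIsometryOn lam 0 s f) :
    LipschitzOnWith (Real.toNNReal lam) f s :=
  LipschitzOnWith.of_dist_le' fun x hx y hy => by
    simpa [Real.dist_eq, abs_sub_comm] using (hf.2.2 x hx y hy).2

theorem of_forall_dist_le {g : ℝ → X} {ε : ℝ} (hf : QuasiIsometryOn lam C s f) (hε : 0 ≤ ε)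
    (hfg : ∀ x ∈ s, dist (f x) (g x) ≤ ε) : QuasiIsometryOn lam (C + 2 * ε) s g := by
  obtain ⟨hlam, hC, hf⟩ := hf
  refine ⟨hlam, by positivity, fun x hx y hy => ?_⟩
  have hx' := hfg x hx
  have hy' := hfg y hy
  have h1 := dist_triangle4 (f x) (g x) (g y) (f y)
  have h2 := dist_triangle4 (g x) (f x) (f y) (g y)
  rw [dist_comm (g y)] at h1
  rw [dist_comm (g x) (f x)] at h2
  constructor <;> linarith [hf x hx y hy]

theorem dist_le_of_lipschitzOnWith {d : ℝ → X} {K : ℝ≥0} {h u v : ℝ}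
    (hf : QuasiIsometryOn lam C s f) (hd : LipschitzOnWith K d s) (hu : u ∈ s) (hv : v ∈ s)
    (hdf : d v = f v) (huv : |u - v| ≤ h) : dist (f u) (d u) ≤ (lam + K) * h + C := by
  have hfuv := (hf.2.2 v hv u hu).2
  have hduv := hd.dist_le_mul v hv u hu
  rw [Real.dist_eq, abs_sub_comm] at hduv
  calc dist (f u) (d u) ≤ dist (f u) (f v) + dist (d v) (d u) := hdf ▸ dist_triangle _ _ _
    _ ≤ (lam * |u - v| + C) + K * |u - v| := by
        rw [dist_comm]
        exact add_le_add hfuv hduv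
    _ = (lam + K) * |u - v| + C := by ring
    _ ≤ (lam + K) * h + C := by
        have : 0 ≤ lam + K := by linarith [hf.1, K.2]
        gcongr

end QuasiIsometryOn

theorem QuasiIsometryOn.exists_lipschitzOnWith_approx (hX : GeodesicSpace X)
    {a b lam C Delta : ℝ} {c : ℝ → X} (hc : QuasiIsometryOn lam C (Icc a b) c)
    (hDelta : 1 < Delta) (hC : 0 < C) (hab : a ≤ b) (hcab : Delta * C ≤ dist (c a) (c b)) :
    ∃ d : ℝ → X, d a = c a ∧ d b = c b ∧
      LipschitzOnWith (Real.toNNReal (Delta / (Delta - 1) * lam)) d (Icc a b) ∧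
      ∀ x ∈ Icc a b, dist (c x) (d x) ≤ 4 * Delta * C := by
  have hΔ : 0 < Delta - 1 := sub_pos.2 hDelta
  have hlam₀ : 0 < lam := one_pos.trans_le hc.1
  have hlen : C ≤ lam * (b - a) / (Delta - 1) := by
    have := (hc.2.2 a ⟨le_rfl, hab⟩ b ⟨hab, le_rfl⟩).2
    rw [abs_of_nonneg (sub_nonneg.2 hab)] at this
    rw [le_div_iff₀ hΔ]
    linarith
  obtain ⟨N, hN, hqC, hq2C⟩ := exists_nat_pos_div_mem_Icc hC hlen
  set h := (b - a) / N
  -- `q` is the excess `(L - λ) h` of the Lipschitz bound `L = Δ λ / (Δ - 1)` over `λ` on a step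
  set q := lam * (b - a) / (Delta - 1) / N
  have hNh : a + N * h = b := by
    simp only [h]
    field_simp
    ring
  have hLh : Delta / (Delta - 1) * lam * h = lam * h + q := by
    simp only [h, q]
    field_simp
    ring
  have hlamh : lam * h = (Delta - 1) * q := by
    simp only [h, q]
    field_simp
  have hh : 0 < h := pos_of_mul_pos_right (hlamh ▸ mul_pos hΔ (hC.trans_le hqC)) hlam₀.le
  set L := Delta / (Delta - 1) * lam
  have hL : 0 ≤ L := by positivity
  have hnode : ∀ i ≤ N, a + i * h ∈ Icc a b := fun i hi =>
    ⟨le_add_of_nonneg_right (by positivity), hNh ▸ by gcongr⟩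
  have hstep : ∀ i < N, dist (c (a + i * h)) (c (a + ↑(i + 1) * h)) ≤ Real.toNNReal L * h := by
    intro i hi
    have := (hc.2.2 _ (hnode i hi.le) _ (hnode (i + 1) hi)).2
    rw [Nat.cast_succ, show a + (i + 1) * h - (a + i * h) = h by ring, abs_of_pos hh] at this
    rw [Nat.cast_succ, Real.coe_toNNReal _ hL]
    linarith
  obtain ⟨d, hd, hdc⟩ := hX.exists_lipschitzOnWith_uniform_interpolation c hh N hstep
  rw [hNh] at hd
  refine ⟨d, by simpa using hdc 0 N.zero_le, hNh ▸ hdc N le_rfl, hd, fun u hu => ?_⟩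
  obtain ⟨i, hi, hui⟩ := exists_nat_le_abs_sub_add_mul_le hh (hNh.symm ▸ hu)
  have := hc.dist_le_of_lipschitzOnWith hd hu (hnode i hi) (hdc i hi) hui
  have hqC' : (Delta - 1) * q ≤ (Delta - 1) * (2 * C) := by gcongr
  rw [Real.coe_toNNReal _ hL, add_mul] at this
  linarith

theorem quasi_geodesic_made_lipschitz_general
    (hX : GeodesicSpace X) {a b lam C Delta : ℝ} {c : ℝ → X}
    (hc : QuasiIsometryOn lam C (Icc a b) c)
    (hDelta : Delta > 1)
    (hab : dist (c a) (c b) ≥ Delta * C) :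
    ∃ d : ℝ → X, ContinuousOn d (Icc a b) ∧ d a = c a ∧ d b = c b ∧
      (∀ x ∈ Icc a b, dist (c x) (d x) ≤ 4 * Delta * C) ∧
      QuasiIsometryOn lam ((8 * Delta + 1) * C) (Icc a b) d ∧
      (∀ x ∈ Icc a b, ∀ y ∈ Icc a b, dist (d x) (d y) ≤ (Delta / (Delta - 1)) * lam * |y - x|) := by
  have hlamL : lam ≤ Delta / (Delta - 1) * lam :=
    le_mul_of_one_le_left (zero_le_one.trans hc.1)
      ((one_le_div (sub_pos.2 hDelta)).2 (by linarith))
  suffices ∃ d : ℝ → X, d a = c a ∧ d b = c b ∧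
      LipschitzOnWith (Real.toNNReal (Delta / (Delta - 1) * lam)) d (Icc a b) ∧
      ∀ x ∈ Icc a b, dist (c x) (d x) ≤ 4 * Delta * C by
    obtain ⟨d, hda, hdb, hd, hcd⟩ := this
    refine ⟨d, hd.continuousOn, hda, hdb, hcd, ?_, fun x hx y hy => ?_⟩
    · rw [show (8 * Delta + 1) * C = C + 2 * (4 * Delta * C) by ring]
      exact hc.of_forall_dist_le (mul_nonneg (by linarith) hc.2.1) hcd
    · have := hd.dist_le_mul x hx y hy
      rwa [Real.coe_toNNReal _ ((zero_le_one.trans hc.1).trans hlamL), Real.dist_eq,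
        abs_sub_comm] at this
  obtain hC | hC := hc.2.1.eq_or_lt
  · subst hC
    exact ⟨c, rfl, rfl, hc.lipschitzOnWith.weaken (Real.toNNReal_le_toNNReal hlamL),
      fun x _ => by simp⟩
  obtain hba | hab' := lt_or_ge b a
  · exact ⟨c, rfl, rfl, by simp [Icc_eq_empty_of_lt hba], by simp [Icc_eq_empty_of_lt hba]⟩
  exact hc.exists_lipschitzOnWith_approx hX hDelta hC hab' hab
end
end

section
/- Let X be a δ-hyperbolic geodesic space and G a K-quasiconvex subset. If p_x is a closest-point projection of x on G and p_y a closest-point projection of y on G, then d(p_x, p_y) ≤ max(5δ + 2K, d(x,y) − d(x,p_x) − d(y,p_y) + 10δ + 4K). -/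
open Metric Set Real

noncomputable section

variable {X : Type*} [MetricSpace X]

/-!
If `p` projects `x` on `G` and `q ∈ G`, a geodesic from `p` to `q` stays `K`-close to `G`, and
hyperbolicity puts a point of it within `(p, q)_x + 2δ` of `x`; minimality of `d(x, p)` then
gives `(x, q)_p ≤ 2δ + K`. So `(x, py)_px` and `(y, px)_py` are at most `2δ + K`. The
four-point condition at `px` either makes `(x, y)_px` small, which gives the second bound,
or makes `(y, py)_px` small, which together with `(y, px)_py ≤ 2δ + K` bounds `d(px, py)`.
-/

lemma gromovProd_add_gromovProd (x y w : X) :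
    gromovProd x y w + gromovProd w y x = dist x w := by
  simp only [gromovProd, dist_comm w x, dist_comm y w, dist_comm y x]
  ring

lemma GeodesicSegmentBetween.exists_dist_eq {H : Set X} {p q : X}
    (hH : GeodesicSegmentBetween H p q) {t : ℝ} (ht : t ∈ Icc 0 (dist p q)) :
    ∃ z ∈ H, dist p z = t ∧ dist z q = dist p q - t := by
  obtain ⟨f, hf0, hf1, hiso, rfl⟩ := hH
  refine ⟨f t, mem_image_of_mem f ht, ?_, ?_⟩
  · rw [← hf0, hiso 0 ⟨le_rfl, dist_nonneg⟩ t ht, zero_sub, abs_neg, abs_of_nonneg ht.1]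
  · have h := hiso t ht _ ⟨dist_nonneg, le_rfl⟩
    rw [hf1] at h
    rw [h, abs_sub_comm, abs_of_nonneg (sub_nonneg.2 ht.2)]

/-- Witness: the point `z` at distance `(x, q)_p` from `p`, where `(p, z)_x = (z, q)_x`. -/
lemma IsHyperbolic.exists_mem_dist_le_gromovProd_add {δ : ℝ} (hδ : IsHyperbolic X δ)
    {H : Set X} {p q : X} (hH : GeodesicSegmentBetween H p q) (x : X) :
    ∃ z ∈ H, dist x z ≤ gromovProd p q x + 2 * δ := by
  have hx := dist_triangle x p q
  have hq := dist_triangle x q p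
  have hpq := dist_comm p q
  have hxp := dist_comm x p
  have hxq := dist_comm x q
  have ht : gromovProd x q p ∈ Icc 0 (dist p q) := by
    constructor <;> · unfold gromovProd; linarith
  obtain ⟨z, hzH, hpz, hzq⟩ := hH.exists_dist_eq ht
  refine ⟨z, hzH, ?_⟩
  have hfour := hδ p z q x
  have hbalanced : gromovProd p z x = gromovProd z q x := by
    unfold gromovProd at hpz hzq ⊢
    rw [hpz, hzq]
    linarith
  rw [hbalanced, min_self] at hfour
  have hxz := dist_comm x z
  unfold gromovProd at hfour hzq ⊢
  linarith

lemma ProjOn.gromovProd_le {δ K : ℝ} (hδ : IsHyperbolic X δ) {G : Set X}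
    (hG : Quasiconvex K G) {x p q : X} (hp : ProjOn p x G) (hq : q ∈ G) :
    gromovProd x q p ≤ 2 * δ + K := by
  obtain ⟨H, hH, hHK⟩ := hG p hp.1 q hq
  obtain ⟨z, hzH, hxz⟩ := hδ.exists_mem_dist_le_gromovProd_add hH x
  have hproj : infDist x G ≤ infDist z G + dist x z := infDist_le_infDist_add_dist
  linarith [hHK z hzH, hp.2, gromovProd_add_gromovProd x q p]

theorem proj_along_quasiconvex_contraction_general {δ K : ℝ}
    (hδ : IsHyperbolic X δ)
    {G : Set X} (hG : Quasiconvex K G)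
    {x y px py : X} (hpx : ProjOn px x G) (hpy : ProjOn py y G) :
    dist px py ≤ max (5 * δ + 2 * K)
      (dist x y - dist x px - dist y py + 10 * δ + 4 * K) := by
  have hx := hpx.gromovProd_le hδ hG hpy.1
  have hy := hpy.gromovProd_le hδ hG hpx.1
  have hfour := hδ x y py px
  have h₁ := dist_comm px py
  have h₂ := dist_comm y px
  unfold gromovProd at hx hy
  rcases min_le_iff.1 (sub_le_iff_le_add.1 (hfour.trans hx)) with hxy | hypy
  · refine le_max_of_le_right ?_
    unfold gromovProd at hxy
    linarith
  · refine le_max_of_le_left ?_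
    unfold gromovProd at hypy
    linarith

theorem proj_along_quasiconvex_contraction {δ K : ℝ}
    (hX : GeodesicSpace X) (hδ : IsHyperbolic X δ)
    {G : Set X} (hG : Quasiconvex K G)
    {x y px py : X} (hpx : ProjOn px x G) (hpy : ProjOn py y G) :
    dist px py ≤ max (5 * δ + 2 * K)
      (dist x y - dist x px - dist y py + 10 * δ + 4 * K) :=
  proj_along_quasiconvex_contraction_general hδ hG hpx hpy
end
end

section
/- Let X be a δ-hyperbolic geodesic space with δ > 0, and suppose that for every continuous (λ,C)-quasi-isometric map f : [u⁻,u⁺] → X, every z ∈ [u⁻,u⁺], and every geodesic G between f(u⁻) and f(u⁺), one has d(f(z), G) ≤ K₀ + K₁(1 − exp(−K₂(u⁺ − u⁻))) with K₀, K₁ ≥ 0 and K₂ > 0. Then the image of f is contained in the (K₀ + K₁)-neighborhood of G, and G is contained in the (K₀ + K₁ + δ)-neighborhood of the image of f; hence the Hausdorff distance between image(f) and G is at most K₀ + K₁ + δ. -/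
open Metric Set Real

noncomputable section

variable {X : Type*} [MetricSpace X]

/-!
Since `1 - exp (-K₂ (v - u)) ≤ 1`, every point of `f` is `(K₀ + K₁)`-close to `G`. Conversely, cut `G` at a
point `p` into a piece `A` containing `f u` and a piece `B` containing `f v`; by the intermediate
value theorem some `f t` is equidistant from `A` and `B`, hence `(K₀ + K₁)`-close to both. Since `p`
lies on a geodesic from any point of `A` to any point of `B`, their Gromov product at `p` vanishes,
and the four-point condition puts `f t` within `K₀ + K₁ + δ` of `p`.
-/

theorem Metric.infDist_union_of_nonempty {x : X} {A B : Set X} (hA : A.Nonempty)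
    (hB : B.Nonempty) : infDist x (A ∪ B) = min (infDist x A) (infDist x B) := by
  simp only [infDist, infEDist_union]
  exact ENNReal.toReal_min (infEDist_ne_top hA) (infEDist_ne_top hB)

theorem exists_infDist_eq_infDist_of_continuousOn {f : ℝ → X} {u v : ℝ} (huv : u ≤ v)
    (hf : ContinuousOn f (Icc u v)) {A B : Set X} (hA : f u ∈ A) (hB : f v ∈ B) :
    ∃ t ∈ Icc u v, infDist (f t) A = infDist (f t) B := by
  have hφ : ContinuousOn (fun t => infDist (f t) A - infDist (f t) B) (Icc u v) :=
    ((continuous_infDist_pt A).comp_continuousOn hf).sub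
      ((continuous_infDist_pt B).comp_continuousOn hf)
  have hφu : infDist (f u) A - infDist (f u) B ≤ 0 := by
    rw [infDist_zero_of_mem hA]; linarith [infDist_nonneg (x := f u) (s := B)]
  have hφv : 0 ≤ infDist (f v) A - infDist (f v) B := by
    rw [infDist_zero_of_mem hB]; linarith [infDist_nonneg (x := f v) (s := A)]
  obtain ⟨t, ht, hφt⟩ := intermediate_value_Icc huv hφ ⟨hφu, hφv⟩
  exact ⟨t, ht, sub_eq_zero.mp hφt⟩

theorem gromovProd_eq_zero_of_isometryOn {γ : ℝ → X} {I : Set ℝ}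
    (hγ : ∀ s ∈ I, ∀ t ∈ I, dist (γ s) (γ t) = |s - t|) {r s t : ℝ} (hr : r ∈ I) (hs : s ∈ I)
    (ht : t ∈ I) (hrs : r ≤ s) (hst : s ≤ t) : gromovProd (γ r) (γ t) (γ s) = 0 := by
  rw [gromovProd, hγ r hr s hs, hγ t ht s hs, hγ r hr t ht, abs_of_nonpos (by linarith),
    abs_of_nonneg (by linarith), abs_of_nonpos (by linarith)]
  ring

theorem GeodesicSegmentBetween.left_mem {G : Set X} {x y : X}
    (hG : GeodesicSegmentBetween G x y) : x ∈ G := by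
  obtain ⟨γ, hγ0, -, -, rfl⟩ := hG
  exact ⟨0, ⟨le_rfl, dist_nonneg⟩, hγ0⟩

namespace IsHyperbolic

variable {δ : ℝ}

theorem nonneg (hδ : IsHyperbolic X δ) (x : X) : 0 ≤ δ := by
  simpa [gromovProd] using hδ x x x x

theorem dist_le_max_add_gromovProd (hδ : IsHyperbolic X δ) (a b p x : X) :
    dist x p ≤ max (dist x a) (dist x b) + gromovProd a b p + δ := by
  have hxa : dist x p - dist x a ≤ gromovProd a x p := by
    unfold gromovProd; linarith [dist_triangle x a p, dist_comm a x]
  have hxb : dist x p - dist x b ≤ gromovProd x b p := by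
    unfold gromovProd; linarith [dist_triangle x b p, dist_comm b p]
  have hmin : dist x p - max (dist x a) (dist x b) ≤ min (gromovProd a x p) (gromovProd x b p) :=
    le_min (by linarith [le_max_left (dist x a) (dist x b)])
      (by linarith [le_max_right (dist x a) (dist x b)])
  linarith [hδ a x b p]

theorem dist_le_max_infDist_add (hδ : IsHyperbolic X δ) {A B : Set X} (hA : A.Nonempty)
    (hB : B.Nonempty) {p : X} (hAB : ∀ a ∈ A, ∀ b ∈ B, gromovProd a b p ≤ 0) (x : X) :
    dist x p ≤ max (infDist x A) (infDist x B) + δ := by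
  refine le_of_forall_pos_lt_add fun ε hε => ?_
  obtain ⟨a, ha, hxa⟩ := (infDist_lt_iff hA).mp (lt_add_of_pos_right (infDist x A) hε)
  obtain ⟨b, hb, hxb⟩ := (infDist_lt_iff hB).mp (lt_add_of_pos_right (infDist x B) hε)
  have hmax : max (dist x a) (dist x b) < max (infDist x A) (infDist x B) + ε :=
    max_lt (hxa.trans_le (by gcongr; exact le_max_left _ _))
      (hxb.trans_le (by gcongr; exact le_max_right _ _))
  linarith [hδ.dist_le_max_add_gromovProd a b p x, hAB a ha b hb]

theorem infDist_image_le_of_forall_infDist_le (hδ : IsHyperbolic X δ) {f : ℝ → X} {u v : ℝ}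
    (huv : u ≤ v) (hf : ContinuousOn f (Icc u v)) {G : Set X}
    (hG : GeodesicSegmentBetween G (f u) (f v)) {K : ℝ}
    (hK : ∀ z ∈ Icc u v, infDist (f z) G ≤ K) :
    ∀ g ∈ G, infDist g (f '' Icc u v) ≤ K + δ := by
  obtain ⟨γ, hγ0, hγD, hγ, rfl⟩ := hG
  set D := dist (f u) (f v)
  rintro _ ⟨s, hs, rfl⟩
  set A := γ '' Icc 0 s
  set B := γ '' Icc s D
  have hA : f u ∈ A := hγ0 ▸ mem_image_of_mem γ ⟨le_rfl, hs.1⟩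
  have hB : f v ∈ B := hγD ▸ mem_image_of_mem γ ⟨hs.2, le_rfl⟩
  have hAB : ∀ a ∈ A, ∀ b ∈ B, gromovProd a b (γ s) ≤ 0 := by
    rintro _ ⟨r, hr, rfl⟩ _ ⟨t, ht, rfl⟩
    exact (gromovProd_eq_zero_of_isometryOn hγ ⟨hr.1, hr.2.trans hs.2⟩ hs
      ⟨hs.1.trans ht.1, ht.2⟩ hr.2 ht.1).le
  have hG : γ '' Icc 0 D = A ∪ B := by rw [← image_union, Icc_union_Icc_eq_Icc hs.1 hs.2]
  obtain ⟨t, ht, hAt⟩ := exists_infDist_eq_infDist_of_continuousOn huv hf hA hB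
  have hfG : max (infDist (f t) A) (infDist (f t) B) ≤ K := by
    have hmax : max (infDist (f t) A) (infDist (f t) B) = infDist (f t) (A ∪ B) := by
      rw [infDist_union_of_nonempty ⟨_, hA⟩ ⟨_, hB⟩, hAt, max_self, min_self]
    exact hmax ▸ hG ▸ hK t ht
  calc infDist (γ s) (f '' Icc u v) ≤ dist (f t) (γ s) :=
        dist_comm (f t) (γ s) ▸ infDist_le_dist_of_mem (mem_image_of_mem f ht)
    _ ≤ K + δ := by linarith [hδ.dist_le_max_infDist_add ⟨_, hA⟩ ⟨_, hB⟩ hAB (f t)]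

end IsHyperbolic

theorem hausdorff_distance_from_inductive_estimate_general {δ lam C K₀ K₁ K₂ : ℝ}
    (hδ : IsHyperbolic X δ)
    (hK₁ : 0 ≤ K₁)
    (hyp : ∀ u v : ℝ, ∀ g : ℝ → X, u ≤ v →
      QuasiIsometryOn lam C (Icc u v) g → ContinuousOn g (Icc u v) →
      ∀ z ∈ Icc u v, ∀ G : Set X, GeodesicSegmentBetween G (g u) (g v) →
        infDist (g z) G ≤ K₀ + K₁ * (1 - Real.exp (-K₂ * (v - u))))
    {u v : ℝ} (huv : u ≤ v) {f : ℝ → X}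
    (hf : QuasiIsometryOn lam C (Icc u v) f)
    (hcont : ContinuousOn f (Icc u v))
    {G : Set X} (hG : GeodesicSegmentBetween G (f u) (f v)) :
    (∀ z ∈ Icc u v, infDist (f z) G ≤ K₀ + K₁) ∧
    (∀ g ∈ G, infDist g (f '' Icc u v) ≤ K₀ + K₁ + δ) ∧
    hausdorffDist (f '' Icc u v) G ≤ K₀ + K₁ + δ := by
  have hfG : ∀ z ∈ Icc u v, infDist (f z) G ≤ K₀ + K₁ := fun z hz =>
    (hyp u v f huv hf hcont z hz G hG).trans <| by
      nlinarith [Real.exp_pos (-K₂ * (v - u))]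
  have hGf := hδ.infDist_image_le_of_forall_infDist_le huv hcont hG hfG
  refine ⟨hfG, hGf, hausdorffDist_le_of_infDist ?_ ?_ hGf⟩
  · exact infDist_nonneg.trans (hGf _ hG.left_mem)
  · rintro _ ⟨z, hz, rfl⟩
    linarith [hfG z hz, hδ.nonneg (f u)]

theorem hausdorff_distance_from_inductive_estimate {δ lam C K₀ K₁ K₂ : ℝ}
    (hX : GeodesicSpace X) (hδ : IsHyperbolic X δ) (hδ0 : 0 < δ)
    (hK₀ : 0 ≤ K₀) (hK₁ : 0 ≤ K₁) (hK₂ : 0 < K₂)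
    (hyp : ∀ u v : ℝ, ∀ g : ℝ → X, u ≤ v →
      QuasiIsometryOn lam C (Icc u v) g → ContinuousOn g (Icc u v) →
      ∀ z ∈ Icc u v, ∀ G : Set X, GeodesicSegmentBetween G (g u) (g v) →
        infDist (g z) G ≤ K₀ + K₁ * (1 - Real.exp (-K₂ * (v - u))))
    {u v : ℝ} (huv : u ≤ v) {f : ℝ → X}
    (hf : QuasiIsometryOn lam C (Icc u v) f)
    (hcont : ContinuousOn f (Icc u v))
    {G : Set X} (hG : GeodesicSegmentBetween G (f u) (f v)) :
    (∀ z ∈ Icc u v, infDist (f z) G ≤ K₀ + K₁) ∧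
    (∀ g ∈ G, infDist g (f '' Icc u v) ≤ K₀ + K₁ + δ) ∧
    hausdorffDist (f '' Icc u v) G ≤ K₀ + K₁ + δ :=
  hausdorff_distance_from_inductive_estimate_general hδ hK₁ hyp huv hf hcont hG
end
end
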